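/- Let δ ∈ (0,1] and let (λ̂_i)_{i≥1} be real numbers with λ̂₁ = 1 and 0 ≤ λ̂_i ≤ 1−δ for all i ≥ 2. Let (γ_{ij})_{i,j≥1} be a square-summable double array of reals, and let a > 0 and B < ∞. For each integer t ≥ 1 let (α_i^{(t)})_{i≥1} be a square-summable real sequence with Σ_i (α_i^{(t)})² ≤ B and α₁^{(t)} ≥ a. Then for every t ≥ 1 the double series Σ_{i,j} γ_{ij} α_i^{(t)} α_j^{(t)} λ̂_i^t λ̂_j^{t−1} converges absolutely, the series Σ_i λ̂_i^{2t} (α_i^{(t)})² is strictly positive, and the ratio (Σ_{i,j} γ_{ij} α_i^{(t)} α_j^{(t)} λ̂_i^t λ̂_j^{t−1}) / (Σ_i λ̂_i^{2t} (α_i^{(t)})²) converges to γ_{11} as t → ∞. -/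
import Mathlib


open Filter

set_option maxHeartbeats 1000000

/-- Coefficient-level convergence of the normalized partition-function ratios:
sequences are indexed by `ℕ`, with index `0` playing the role of "i = 1" of the paper.
`lam` are the rescaled eigenvalues (top one equal to `1`, the rest at most `1 - δ`),
`γ` is a square-summable double array, and for each `t ≥ 1` the boundary coefficients
`α t` are square-summable with `∑ (α t i)² ≤ B` and `α t 0 ≥ a > 0`.  Then the double
series converges absolutely, the denominator is positive, and the ratio tends to `γ 0 0`. -/
theorem stmt1 (δ : ℝ) (hδ : δ ∈ Set.Ioc (0 : ℝ) 1)
    (lam : ℕ → ℝ) (hlam₁ : lam 0 = 1)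
    (hlam : ∀ i : ℕ, 1 ≤ i → 0 ≤ lam i ∧ lam i ≤ 1 - δ)
    (γ : ℕ → ℕ → ℝ) (hγ : Summable fun p : ℕ × ℕ => (γ p.1 p.2) ^ 2)
    (a B : ℝ) (ha : 0 < a)
    (α : ℕ → ℕ → ℝ)
    (hαsum : ∀ t : ℕ, 1 ≤ t → Summable fun i => (α t i) ^ 2)
    (hαB : ∀ t : ℕ, 1 ≤ t → (∑' i, (α t i) ^ 2) ≤ B)
    (hα₁ : ∀ t : ℕ, 1 ≤ t → a ≤ α t 0) :
    (∀ t : ℕ, 1 ≤ t →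
      Summable (fun p : ℕ × ℕ =>
        |γ p.1 p.2 * α t p.1 * α t p.2 * lam p.1 ^ t * lam p.2 ^ (t - 1)|) ∧
      0 < ∑' i, lam i ^ (2 * t) * (α t i) ^ 2) ∧
    Tendsto (fun t : ℕ =>
        (∑' p : ℕ × ℕ, γ p.1 p.2 * α t p.1 * α t p.2 * lam p.1 ^ t * lam p.2 ^ (t - 1)) /
        (∑' i, lam i ^ (2 * t) * (α t i) ^ 2))
      atTop (nhds (γ 0 0)) := by
  obtain ⟨hδ0, hδ1⟩ := hδ
  set ε : ℝ := 1 - δ with hεdef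
  have hε0 : 0 ≤ ε := by simp only [hεdef]; linarith
  have hε1 : ε < 1 := by simp only [hεdef]; linarith
  have hlam0 : ∀ i, 0 ≤ lam i := by
    intro i
    rcases Nat.eq_zero_or_pos i with h | h
    · simp [h, hlam₁]
    · exact (hlam i h).1
  have hlam1 : ∀ i, lam i ≤ 1 := by
    intro i
    rcases Nat.eq_zero_or_pos i with h | h
    · simp [h, hlam₁]
    · linarith [(hlam i h).2]
  have hB0 : (0 : ℝ) ≤ B :=
    le_trans (tsum_nonneg fun i => sq_nonneg _) (hαB 1 le_rfl)
  set G : ℝ := ∑' p : ℕ × ℕ, (γ p.1 p.2) ^ 2 with hGdef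
  have hG0 : 0 ≤ G := tsum_nonneg fun p => sq_nonneg _
  set C : ℝ := (G + B ^ 2) / 2 with hCdef
  have hC0 : 0 ≤ C := by positivity
  set K : ℝ := (C + |γ 0 0| * B) / a ^ 2 with hKdef
  have hK0 : 0 ≤ K := by positivity
  -- main pointwise facts for each t ≥ 1
  have main : ∀ t : ℕ, 1 ≤ t →
      Summable (fun p : ℕ × ℕ =>
        |γ p.1 p.2 * α t p.1 * α t p.2 * lam p.1 ^ t * lam p.2 ^ (t - 1)|) ∧
      a ^ 2 ≤ (∑' i, lam i ^ (2 * t) * (α t i) ^ 2) ∧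
      |(∑' p : ℕ × ℕ, γ p.1 p.2 * α t p.1 * α t p.2 * lam p.1 ^ t * lam p.2 ^ (t - 1)) /
        (∑' i, lam i ^ (2 * t) * (α t i) ^ 2) - γ 0 0| ≤ K * ε ^ (t - 1) := by
    intro t ht
    have hαs := hαsum t ht
    have hA0 : 0 ≤ ∑' i, (α t i) ^ 2 := tsum_nonneg fun i => sq_nonneg _
    have hAB := hαB t ht
    -- the quadratic majorant
    set h : ℕ × ℕ → ℝ := fun p => ((γ p.1 p.2) ^ 2 + (α t p.1) ^ 2 * (α t p.2) ^ 2) / 2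
      with hhdef
    have hh0 : ∀ p, 0 ≤ h p := by
      intro p; simp only [hhdef]; positivity
    have hprod : Summable fun p : ℕ × ℕ => (α t p.1) ^ 2 * (α t p.2) ^ 2 :=
      hαs.mul_of_nonneg hαs (fun i => sq_nonneg _) (fun i => sq_nonneg _)
    have hSh : Summable h := by
      simpa [hhdef, div_eq_mul_inv] using (hγ.add hprod).mul_right (2 : ℝ)⁻¹
    have hhsum : ∑' p, h p ≤ C := by
      have h1 : ∑' p : ℕ × ℕ, (α t p.1) ^ 2 * (α t p.2) ^ 2
          = (∑' i, (α t i) ^ 2) * (∑' i, (α t i) ^ 2) :=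
        (Summable.tsum_mul_tsum hαs hαs hprod).symm
      have h2 : ∑' p, h p = (G + ∑' p : ℕ × ℕ, (α t p.1) ^ 2 * (α t p.2) ^ 2) / 2 := by
        simp only [hhdef, div_eq_mul_inv]
        rw [tsum_mul_right, Summable.tsum_add hγ hprod]
      rw [h2, h1, hCdef]
      nlinarith
    -- the lambda factor
    set L : ℕ × ℕ → ℝ := fun p => lam p.1 ^ t * lam p.2 ^ (t - 1) with hLdef
    have hL0 : ∀ p, 0 ≤ L p := fun p =>
      mul_nonneg (pow_nonneg (hlam0 _) _) (pow_nonneg (hlam0 _) _)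
    have hL1 : ∀ p, L p ≤ 1 := fun p =>
      mul_le_one₀ (pow_le_one₀ (hlam0 _) (hlam1 _)) (pow_nonneg (hlam0 _) _)
        (pow_le_one₀ (hlam0 _) (hlam1 _))
    have hεpow : ε ^ t ≤ ε ^ (t - 1) := pow_le_pow_of_le_one hε0 hε1.le (Nat.sub_le t 1)
    have hεt0 : 0 ≤ ε ^ (t - 1) := pow_nonneg hε0 _
    have hLε : ∀ p : ℕ × ℕ, p ≠ (0, 0) → L p ≤ ε ^ (t - 1) := by
      intro p hp
      rcases Nat.eq_zero_or_pos p.1 with h1 | h1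
      · have h2 : 1 ≤ p.2 := by
          rcases Nat.eq_zero_or_pos p.2 with h2 | h2
          · exact absurd (Prod.ext h1 h2) hp
          · exact h2
        have : lam p.2 ^ (t - 1) ≤ ε ^ (t - 1) :=
          pow_le_pow_left₀ (hlam0 _) (hlam p.2 h2).2 _
        calc L p = lam p.2 ^ (t - 1) := by
              simp [hLdef, h1, hlam₁]
          _ ≤ ε ^ (t - 1) := this
      · have h2 : lam p.1 ^ t ≤ ε ^ t := pow_le_pow_left₀ (hlam0 _) (hlam p.1 h1).2 _
        calc L p ≤ lam p.1 ^ t * 1 :=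
              mul_le_mul_of_nonneg_left (pow_le_one₀ (hlam0 _) (hlam1 _))
                (pow_nonneg (hlam0 _) _)
          _ = lam p.1 ^ t := mul_one _
          _ ≤ ε ^ t := h2
          _ ≤ ε ^ (t - 1) := hεpow
    -- pointwise AM-GM bound
    have habs : ∀ p : ℕ × ℕ,
        |γ p.1 p.2 * α t p.1 * α t p.2 * lam p.1 ^ t * lam p.2 ^ (t - 1)|
          = |γ p.1 p.2 * α t p.1 * α t p.2| * L p := by
      intro p
      rw [abs_mul, abs_mul, abs_of_nonneg (pow_nonneg (hlam0 _) _),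
        abs_of_nonneg (pow_nonneg (hlam0 _) _)]
      simp [hLdef, mul_assoc]
    have hAMGM : ∀ p : ℕ × ℕ, |γ p.1 p.2 * α t p.1 * α t p.2| ≤ h p := by
      intro p
      have he : γ p.1 p.2 * α t p.1 * α t p.2 = γ p.1 p.2 * (α t p.1 * α t p.2) := by ring
      rw [he, abs_mul]
      simp only [hhdef]
      nlinarith [sq_nonneg (|γ p.1 p.2| - |α t p.1 * α t p.2|), sq_abs (γ p.1 p.2),
        sq_abs (α t p.1 * α t p.2), mul_pow (α t p.1) (α t p.2) 2]
    have hbound1 : ∀ p : ℕ × ℕ,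
        |γ p.1 p.2 * α t p.1 * α t p.2 * lam p.1 ^ t * lam p.2 ^ (t - 1)| ≤ h p := by
      intro p
      rw [habs p]
      calc |γ p.1 p.2 * α t p.1 * α t p.2| * L p
          ≤ h p * 1 := mul_le_mul (hAMGM p) (hL1 p) (hL0 p) (hh0 p)
        _ = h p := mul_one _
    have hSabs : Summable (fun p : ℕ × ℕ =>
        |γ p.1 p.2 * α t p.1 * α t p.2 * lam p.1 ^ t * lam p.2 ^ (t - 1)|) :=
      Summable.of_nonneg_of_le (fun p => abs_nonneg _) hbound1 hSh
    have hSf : Summable (fun p : ℕ × ℕ =>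
        γ p.1 p.2 * α t p.1 * α t p.2 * lam p.1 ^ t * lam p.2 ^ (t - 1)) :=
      Summable.of_abs hSabs
    -- denominator
    have hd0 : ∀ i, 0 ≤ lam i ^ (2 * t) * (α t i) ^ 2 := fun i =>
      mul_nonneg (pow_nonneg (hlam0 _) _) (sq_nonneg _)
    have hdle : ∀ i, lam i ^ (2 * t) * (α t i) ^ 2 ≤ (α t i) ^ 2 := by
      intro i
      calc lam i ^ (2 * t) * (α t i) ^ 2 ≤ 1 * (α t i) ^ 2 :=
            mul_le_mul_of_nonneg_right (pow_le_one₀ (hlam0 _) (hlam1 _)) (sq_nonneg _)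
        _ = (α t i) ^ 2 := one_mul _
    have hdsum : Summable fun i => lam i ^ (2 * t) * (α t i) ^ 2 :=
      Summable.of_nonneg_of_le hd0 hdle hαs
    have hd00 : lam 0 ^ (2 * t) * (α t 0) ^ 2 = (α t 0) ^ 2 := by
      simp [hlam₁]
    have hDa : a ^ 2 ≤ ∑' i, lam i ^ (2 * t) * (α t i) ^ 2 := by
      have h1 : a ^ 2 ≤ lam 0 ^ (2 * t) * (α t 0) ^ 2 := by
        rw [hd00]
        exact pow_le_pow_left₀ ha.le (hα₁ t ht) 2
      exact le_trans h1 (Summable.le_tsum hdsum 0 fun i _ => hd0 i)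
    have hDpos : 0 < ∑' i, lam i ^ (2 * t) * (α t i) ^ 2 :=
      lt_of_lt_of_le (by positivity) hDa
    -- denominator remainder
    have hDsplit : ∑' i, lam i ^ (2 * t) * (α t i) ^ 2
        = (α t 0) ^ 2 + ∑' i, (if i = 0 then 0 else lam i ^ (2 * t) * (α t i) ^ 2) := by
      rw [Summable.tsum_eq_add_tsum_ite hdsum 0, hd00]
    set R : ℝ := ∑' i, (if i = 0 then 0 else lam i ^ (2 * t) * (α t i) ^ 2) with hRdef
    have hR0 : 0 ≤ R := tsum_nonneg fun i => by
      by_cases hi : i = 0 <;> simp [hi, hd0 i]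
    have hRle : R ≤ ε ^ (t - 1) * B := by
      have hterm : ∀ i, (if i = 0 then 0 else lam i ^ (2 * t) * (α t i) ^ 2)
          ≤ ε ^ (t - 1) * (α t i) ^ 2 := by
        intro i
        by_cases hi : i = 0
        · simp only [hi, if_pos rfl]
          positivity
        · simp only [if_neg hi]
          have h1 : 1 ≤ i := Nat.one_le_iff_ne_zero.2 hi
          have h2 : lam i ^ (2 * t) ≤ ε ^ (2 * t) :=
            pow_le_pow_left₀ (hlam0 _) (hlam i h1).2 _
          have h3 : ε ^ (2 * t) ≤ ε ^ (t - 1) :=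
            pow_le_pow_of_le_one hε0 hε1.le (by omega)
          exact mul_le_mul_of_nonneg_right (le_trans h2 h3) (sq_nonneg _)
      have hSrhs : Summable fun i => ε ^ (t - 1) * (α t i) ^ 2 := hαs.mul_left _
      have hSlhs : Summable fun i => (if i = 0 then 0 else lam i ^ (2 * t) * (α t i) ^ 2) :=
        Summable.of_nonneg_of_le
          (fun i => by by_cases hi : i = 0 <;> simp [hi, hd0 i]) hterm hSrhs
      calc R ≤ ∑' i, ε ^ (t - 1) * (α t i) ^ 2 := Summable.tsum_le_tsum hterm hSlhs hSrhs
        _ = ε ^ (t - 1) * ∑' i, (α t i) ^ 2 := tsum_mul_left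
        _ ≤ ε ^ (t - 1) * B := mul_le_mul_of_nonneg_left hAB hεt0
    -- numerator remainder
    have hNsplit : ∑' p : ℕ × ℕ, γ p.1 p.2 * α t p.1 * α t p.2 * lam p.1 ^ t * lam p.2 ^ (t - 1)
        = γ 0 0 * (α t 0) ^ 2 + ∑' p : ℕ × ℕ, (if p = (0, 0) then 0 else
            γ p.1 p.2 * α t p.1 * α t p.2 * lam p.1 ^ t * lam p.2 ^ (t - 1)) := by
      rw [Summable.tsum_eq_add_tsum_ite hSf (0, 0)]
      congr 1
      simp [hlam₁, sq, mul_assoc]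
    set Nr : ℝ := ∑' p : ℕ × ℕ, (if p = (0, 0) then 0 else
        γ p.1 p.2 * α t p.1 * α t p.2 * lam p.1 ^ t * lam p.2 ^ (t - 1)) with hNrdef
    have hNrbound : |Nr| ≤ ε ^ (t - 1) * C := by
      have hterm : ∀ p : ℕ × ℕ, |if p = (0, 0) then 0 else
          γ p.1 p.2 * α t p.1 * α t p.2 * lam p.1 ^ t * lam p.2 ^ (t - 1)|
            ≤ ε ^ (t - 1) * h p := by
        intro p
        by_cases hp : p = (0, 0)
        · rw [if_pos hp, abs_zero]
          exact mul_nonneg hεt0 (hh0 _)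
        · simp only [if_neg hp]
          rw [habs p]
          calc |γ p.1 p.2 * α t p.1 * α t p.2| * L p
              ≤ h p * ε ^ (t - 1) := mul_le_mul (hAMGM p) (hLε p hp) (hL0 p) (hh0 p)
            _ = ε ^ (t - 1) * h p := mul_comm _ _
      have hSrhs : Summable fun p : ℕ × ℕ => ε ^ (t - 1) * h p := hSh.mul_left _
      have hSlhsabs : Summable fun p : ℕ × ℕ => |if p = (0, 0) then 0 else
          γ p.1 p.2 * α t p.1 * α t p.2 * lam p.1 ^ t * lam p.2 ^ (t - 1)| :=
        Summable.of_nonneg_of_le (fun p => abs_nonneg _) hterm hSrhs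
      calc |Nr| ≤ ∑' p : ℕ × ℕ, |if p = (0, 0) then 0 else
            γ p.1 p.2 * α t p.1 * α t p.2 * lam p.1 ^ t * lam p.2 ^ (t - 1)| := by
            have := norm_tsum_le_tsum_norm
              (f := fun p : ℕ × ℕ => if p = (0, 0) then 0 else
                γ p.1 p.2 * α t p.1 * α t p.2 * lam p.1 ^ t * lam p.2 ^ (t - 1))
              (by simpa [Real.norm_eq_abs] using hSlhsabs)
            simpa [Real.norm_eq_abs] using this
        _ ≤ ∑' p : ℕ × ℕ, ε ^ (t - 1) * h p := Summable.tsum_le_tsum hterm hSlhsabs hSrhs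
        _ = ε ^ (t - 1) * ∑' p, h p := tsum_mul_left
        _ ≤ ε ^ (t - 1) * C := mul_le_mul_of_nonneg_left hhsum hεt0
    -- assemble the ratio bound
    refine ⟨hSabs, hDa, ?_⟩
    have hkey : (∑' p : ℕ × ℕ, γ p.1 p.2 * α t p.1 * α t p.2 * lam p.1 ^ t * lam p.2 ^ (t - 1))
        - γ 0 0 * (∑' i, lam i ^ (2 * t) * (α t i) ^ 2) = Nr - γ 0 0 * R := by
      rw [hNsplit, hDsplit]; ring
    have h2 : |(∑' p : ℕ × ℕ, γ p.1 p.2 * α t p.1 * α t p.2 * lam p.1 ^ t * lam p.2 ^ (t - 1))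
        - γ 0 0 * (∑' i, lam i ^ (2 * t) * (α t i) ^ 2)|
          ≤ ε ^ (t - 1) * (C + |γ 0 0| * B) := by
      rw [hkey]
      calc |Nr - γ 0 0 * R| ≤ |Nr| + |γ 0 0 * R| := abs_sub _ _
        _ = |Nr| + |γ 0 0| * R := by rw [abs_mul, abs_of_nonneg hR0]
        _ ≤ ε ^ (t - 1) * C + |γ 0 0| * (ε ^ (t - 1) * B) :=
            add_le_add hNrbound (mul_le_mul_of_nonneg_left hRle (abs_nonneg _))
        _ = ε ^ (t - 1) * (C + |γ 0 0| * B) := by ring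
    have h1 : (∑' p : ℕ × ℕ, γ p.1 p.2 * α t p.1 * α t p.2 * lam p.1 ^ t * lam p.2 ^ (t - 1)) /
        (∑' i, lam i ^ (2 * t) * (α t i) ^ 2) - γ 0 0
        = ((∑' p : ℕ × ℕ, γ p.1 p.2 * α t p.1 * α t p.2 * lam p.1 ^ t * lam p.2 ^ (t - 1))
            - γ 0 0 * (∑' i, lam i ^ (2 * t) * (α t i) ^ 2)) /
          (∑' i, lam i ^ (2 * t) * (α t i) ^ 2) := by
      field_simp
    rw [h1, abs_div, abs_of_pos hDpos]
    calc _ ≤ (ε ^ (t - 1) * (C + |γ 0 0| * B)) / a ^ 2 :=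
          div_le_div₀ (by positivity) h2 (by positivity) hDa
      _ = K * ε ^ (t - 1) := by rw [hKdef]; ring
  constructor
  · intro t ht
    exact ⟨(main t ht).1, lt_of_lt_of_le (by positivity) (main t ht).2.1⟩
  · have htend : Tendsto (fun t : ℕ => K * ε ^ (t - 1)) atTop (nhds 0) := by
      have h1 : Tendsto (fun t : ℕ => ε ^ (t - 1)) atTop (nhds 0) :=
        (tendsto_pow_atTop_nhds_zero_of_lt_one hε0 hε1).comp (tendsto_sub_atTop_nat 1)
      simpa using h1.const_mul K
    have h2 : Tendsto (fun t : ℕ =>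
        (∑' p : ℕ × ℕ, γ p.1 p.2 * α t p.1 * α t p.2 * lam p.1 ^ t * lam p.2 ^ (t - 1)) /
        (∑' i, lam i ^ (2 * t) * (α t i) ^ 2) - γ 0 0) atTop (nhds 0) := by
      apply squeeze_zero_norm' _ htend
      filter_upwards [eventually_ge_atTop 1] with t ht
      simpa using (main t ht).2.2
    have h3 := h2.add (tendsto_const_nhds (x := γ 0 0))
    simpa using h3
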